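/- For every m ≥ 2, the map string 0X1^{m-1}0 is an injective pattern: the function e : ℤ → ZMod 2 with left radius L = 1 and right radius R = m given by e(-1) = 0, e(j) = 1 for 1 ≤ j ≤ m - 1, and e(m) = 0 satisfies the injective pattern condition; consequently its induced global transformation τ_e is injective. -/

import Mathlib

/-- `c` matches the pattern `e` (with radii `L`, `R`, wildcard at position 0) at `n`. -/
def Matches (L R : ℕ) (e : ℤ → ZMod 2) (c : ℤ → ZMod 2) (n : ℤ) : Prop :=
  ∀ j : ℤ, -(L : ℤ) ≤ j → j ≤ (R : ℤ) → j ≠ 0 → c (n + j) = e j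

/-- `e` is an injective pattern for radii `L`, `R`: every prefix sub-string containing
the wildcard differs from the suffix sub-string of the same length. -/
def IsInjectivePattern (L R : ℕ) (e : ℤ → ZMod 2) : Prop :=
  ∀ s : ℤ, 1 ≤ s → s ≤ (R : ℤ) →
    ∃ j : ℤ, -(L : ℤ) ≤ j ∧ j ≤ (R : ℤ) - s ∧ j ≠ 0 ∧ j + s ≠ 0 ∧ e j ≠ e (j + s)

open Classical in
/-- The global transformation induced by the pattern `e`. -/
noncomputable def tau (L R : ℕ) (e : ℤ → ZMod 2) (c : ℤ → ZMod 2) : ℤ → ZMod 2 :=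
  fun n => if Matches L R e c n then 1 + c n else c n

/-!
Two occurrences of an injective pattern can never overlap within a window: if `c` matches `e`
at `n` and at `n + s` with `1 ≤ s ≤ R`, then reading the position `j` that separates the prefix
and suffix of `e` at shift `s` from both occurrences gives `e j = e (j + s)`. Hence flipping the
centre of an occurrence changes no other cell of its window and creates or destroys no
occurrence, so `τ_e` is an involution. For `0X1^(m-1)0` the separating positions are `-1` at
shift `m` and `m - s` at every shorter shift.
-/

section

variable {L R : ℕ} {e c : ℤ → ZMod 2} {n : ℤ}

lemma tau_apply_of_matches (h : Matches L R e c n) : tau L R e c n = 1 + c n := by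
  simp only [tau, if_pos h]

lemma tau_apply_of_not_matches (h : ¬Matches L R e c n) : tau L R e c n = c n := by
  simp only [tau, if_neg h]

end

namespace IsInjectivePattern

variable {L R : ℕ} {e : ℤ → ZMod 2} (hinj : IsInjectivePattern L R e) {c : ℤ → ZMod 2} {n : ℤ}
include hinj

lemma not_matches_add {s : ℤ} (hs₁ : 1 ≤ s) (hs₂ : s ≤ R) (h : Matches L R e c n) :
    ¬Matches L R e c (n + s) := by
  intro h'
  obtain ⟨j, hjL, hjR, hj0, hjs0, hne⟩ := hinj s hs₁ hs₂
  apply hne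
  rw [← h' j hjL (by omega) hj0, ← h (j + s) (by omega) (by omega) hjs0, add_right_comm,
    add_assoc]

lemma eq_zero_of_matches_add (hLR : L ≤ R) {j : ℤ} (hjL : -(L : ℤ) ≤ j) (hjR : j ≤ R)
    (h : Matches L R e c n) (h' : Matches L R e c (n + j)) : j = 0 := by
  by_contra hj0
  rcases lt_or_gt_of_ne hj0 with hneg | hpos
  · refine hinj.not_matches_add (s := -j) (by omega) (by omega) h' ?_
    rwa [add_neg_cancel_right]
  · exact hinj.not_matches_add hpos hjR h h'

lemma tau_apply_add_of_matches (hLR : L ≤ R) (h : Matches L R e c n) {j : ℤ}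
    (hjL : -(L : ℤ) ≤ j) (hjR : j ≤ R) (hj0 : j ≠ 0) : tau L R e c (n + j) = c (n + j) :=
  tau_apply_of_not_matches fun h' => hj0 (hinj.eq_zero_of_matches_add hLR hjL hjR h h')

lemma matches_tau_of_matches (hLR : L ≤ R) (h : Matches L R e c n) :
    Matches L R e (tau L R e c) n := fun j hjL hjR hj0 => by
  rw [hinj.tau_apply_add_of_matches hLR h hjL hjR hj0, h j hjL hjR hj0]

lemma matches_tau_iff (hLR : L ≤ R) :
    Matches L R e (tau L R e c) n ↔ Matches L R e c n := by
  refine ⟨fun h => ?_, hinj.matches_tau_of_matches hLR⟩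
  by_contra hc
  obtain ⟨j, hjL, hjR, hj0, hne⟩ : ∃ j : ℤ, -(L : ℤ) ≤ j ∧ j ≤ R ∧ j ≠ 0 ∧ c (n + j) ≠ e j := by
    simpa [Matches] using hc
  -- a cell of the window changed, so `c` has an occurrence at `n + j`, which survives in `τ c`
  have hj : Matches L R e c (n + j) := by
    by_contra hnot
    exact hne (tau_apply_of_not_matches hnot ▸ h j hjL hjR hj0)
  exact hj0 (hinj.eq_zero_of_matches_add hLR hjL hjR h (hinj.matches_tau_of_matches hLR hj))

lemma tau_involutive (hLR : L ≤ R) : Function.Involutive (tau L R e) := fun c => by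
  funext n
  by_cases h : Matches L R e c n
  · rw [tau_apply_of_matches ((hinj.matches_tau_iff hLR).mpr h), tau_apply_of_matches h,
      CharTwo.add_cancel_left]
  · rw [tau_apply_of_not_matches (mt (hinj.matches_tau_iff hLR).mp h),
      tau_apply_of_not_matches h]

end IsInjectivePattern

lemma isInjectivePattern_zero_X_ones_zero {m : ℕ} (hm : 2 ≤ m) {e : ℤ → ZMod 2}
    (he1 : e (-1) = 0) (he2 : ∀ j : ℤ, 1 ≤ j → j ≤ (m : ℤ) - 1 → e j = 1)
    (he3 : e (m : ℤ) = 0) : IsInjectivePattern 1 m e := by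
  intro s hs₁ hs₂
  rcases hs₂.eq_or_lt with rfl | hlt
  · refine ⟨-1, by norm_num, by omega, by norm_num, by omega, ?_⟩
    rw [he1, he2 _ (by omega) (by omega)]
    exact zero_ne_one
  · refine ⟨m - s, by omega, by omega, by omega, by omega, ?_⟩
    rw [sub_add_cancel, he3, he2 _ (by omega) (by omega)]
    exact one_ne_zero

/-- for every `m ≥ 2`, the map string `0X1^(m-1)0` (left radius 1,
right radius `m`) is an injective pattern, and its induced global transformation is
injective. -/
theorem zero_X_ones_zero_injective (m : ℕ) (hm : 2 ≤ m) (e : ℤ → ZMod 2)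
    (he1 : e (-1) = 0)
    (he2 : ∀ j : ℤ, 1 ≤ j → j ≤ (m : ℤ) - 1 → e j = 1)
    (he3 : e (m : ℤ) = 0) :
    IsInjectivePattern 1 m e ∧ Function.Injective (tau 1 m e) := by
  have hinj := isInjectivePattern_zero_X_ones_zero hm he1 he2 he3
  exact ⟨hinj, (hinj.tau_involutive (by omega)).injective⟩
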